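/- arXiv:2412.05953 — 4 statements merged into one kernel-verified Lean document; each statement's English description precedes it below -/
import Mathlib

section
/- Let F₁ : U → ℝᵖ and F₂ : V → ℝᵐ with U ⊆ ℝⁿ, V ⊆ ℝᵖ open and F₁(U) ⊆ V. Assume F₁ is semismooth with respect to Ψ₁ : ℝⁿ ⇉ ℝ^{p×n} at x̄ ∈ U and F₂ is semismooth with respect to Ψ₂ : ℝᵖ ⇉ ℝ^{m×p} at F₁(x̄). Then the composition F = F₂ ∘ F₁ is semismooth at x̄ with respect to the mapping Ψ(x) := {BA | A ∈ Ψ₁(x), B ∈ Ψ₂(F₁(x))}. -/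
open Filter Topology Set

/-- `F` is semismooth at `xb` (relative to the open set `Ω`) with respect to the set-valued
mapping `Ψ` into linear maps: `dom Ψ` is a neighborhood of `xb`, `Ψ` is locally bounded at
`xb`, and `sup{‖F x - F xb - A (x - xb)‖ : A ∈ Ψ x} = o(‖x - xb‖)` as `x → xb` in `Ω`. -/
def SemismoothAt {n m : ℕ} (Ω : Set (EuclideanSpace ℝ (Fin n)))
    (F : EuclideanSpace ℝ (Fin n) → EuclideanSpace ℝ (Fin m))
    (Ψ : EuclideanSpace ℝ (Fin n) → Set (EuclideanSpace ℝ (Fin n) →L[ℝ] EuclideanSpace ℝ (Fin m)))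
    (xb : EuclideanSpace ℝ (Fin n)) : Prop :=
  {x | (Ψ x).Nonempty} ∈ 𝓝 xb ∧
  (∃ U ∈ 𝓝 xb, ∃ M : ℝ, ∀ x ∈ U, ∀ A ∈ Ψ x, ‖A‖ ≤ M) ∧
  ∀ ε > 0, ∃ δ > 0, ∀ x ∈ Ω, ‖x - xb‖ < δ → ∀ A ∈ Ψ x,
    ‖F x - F xb - A (x - xb)‖ ≤ ε * ‖x - xb‖

/-- Chain rule (Lemma 3.4, Gfrerer–Outrata): if `F₁` is `Ψ₁`-semismooth at `xb ∈ U` and `F₂` is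
`Ψ₂`-semismooth at `F₁ xb`, then `F₂ ∘ F₁` is semismooth at `xb` with respect to
`Ψ(x) = {B ∘ A | A ∈ Ψ₁(x), B ∈ Ψ₂(F₁ x)}`. -/
theorem semismooth_chain_rule {n p m : ℕ}
    (U : Set (EuclideanSpace ℝ (Fin n))) (V : Set (EuclideanSpace ℝ (Fin p)))
    (hU : IsOpen U) (hV : IsOpen V)
    (F₁ : EuclideanSpace ℝ (Fin n) → EuclideanSpace ℝ (Fin p))
    (F₂ : EuclideanSpace ℝ (Fin p) → EuclideanSpace ℝ (Fin m))
    (hmap : MapsTo F₁ U V)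
    (Ψ₁ : EuclideanSpace ℝ (Fin n) → Set (EuclideanSpace ℝ (Fin n) →L[ℝ] EuclideanSpace ℝ (Fin p)))
    (Ψ₂ : EuclideanSpace ℝ (Fin p) → Set (EuclideanSpace ℝ (Fin p) →L[ℝ] EuclideanSpace ℝ (Fin m)))
    (xb : EuclideanSpace ℝ (Fin n)) (hxb : xb ∈ U)
    (h₁ : SemismoothAt U F₁ Ψ₁ xb) (h₂ : SemismoothAt V F₂ Ψ₂ (F₁ xb)) :
    SemismoothAt U (fun x => F₂ (F₁ x))
      (fun x => {C | ∃ A ∈ Ψ₁ x, ∃ B ∈ Ψ₂ (F₁ x), C = B.comp A}) xb := by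
  obtain ⟨hne₁, ⟨U₁, hU₁, M₁, hM₁⟩, hest₁⟩ := h₁
  obtain ⟨hne₂, ⟨U₂, hU₂, M₂, hM₂⟩, hest₂⟩ := h₂
  set M₁' := max M₁ 0 with hM₁'def
  set M₂' := max M₂ 0 with hM₂'def
  have hM₁0 : (0:ℝ) ≤ M₁' := le_max_right _ _
  have hM₂0 : (0:ℝ) ≤ M₂' := le_max_right _ _
  have hM₁1 : (0:ℝ) < M₁' + 1 := by linarith
  obtain ⟨r₁, hr₁pos, hr₁⟩ := Metric.mem_nhds_iff.mp
    (inter_mem (inter_mem hne₁ hU₁) (hU.mem_nhds hxb))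
  obtain ⟨r₂, hr₂pos, hr₂⟩ := Metric.mem_nhds_iff.mp (inter_mem hne₂ hU₂)
  obtain ⟨δ₁, hδ₁pos, hδ₁⟩ := hest₁ 1 one_pos
  -- membership in the small ball gives the Ψ₁ data
  have hball₁ : ∀ x, ‖x - xb‖ < r₁ → ((Ψ₁ x).Nonempty ∧ x ∈ U₁) ∧ x ∈ U := by
    intro x hx
    exact hr₁ (by simpa [Metric.mem_ball, dist_eq_norm] using hx)
  -- Lipschitz-type estimate for F₁ near xb
  have hcont : ∀ x ∈ U, ‖x - xb‖ < min r₁ δ₁ → ‖F₁ x - F₁ xb‖ ≤ (M₁' + 1) * ‖x - xb‖ := by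
    intro x hxU hx
    obtain ⟨⟨⟨A, hAmem⟩, hxU₁⟩, _⟩ := hball₁ x (lt_of_lt_of_le hx (min_le_left _ _))
    have h1 := hδ₁ x hxU (lt_of_lt_of_le hx (min_le_right _ _)) A hAmem
    have hAle : ‖A‖ ≤ M₁' := le_trans (hM₁ x hxU₁ A hAmem) (le_max_left _ _)
    have hAx : ‖A (x - xb)‖ ≤ M₁' * ‖x - xb‖ :=
      le_trans (A.le_opNorm _) (mul_le_mul_of_nonneg_right hAle (norm_nonneg _))
    calc ‖F₁ x - F₁ xb‖ = ‖(F₁ x - F₁ xb - A (x - xb)) + A (x - xb)‖ := by abel_nf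
      _ ≤ ‖F₁ x - F₁ xb - A (x - xb)‖ + ‖A (x - xb)‖ := norm_add_le _ _
      _ ≤ 1 * ‖x - xb‖ + M₁' * ‖x - xb‖ := add_le_add h1 hAx
      _ = (M₁' + 1) * ‖x - xb‖ := by ring
  set ρ := min (min r₁ δ₁) (r₂ / (M₁' + 1)) with hρdef
  have hρpos : 0 < ρ := lt_min (lt_min hr₁pos hδ₁pos) (div_pos hr₂pos hM₁1)
  -- F₁ maps points of U close to xb into the good Ψ₂ region
  have hF : ∀ x ∈ U, ‖x - xb‖ < ρ → (Ψ₂ (F₁ x)).Nonempty ∧ F₁ x ∈ U₂ := by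
    intro x hxU hx
    have h1 : ‖F₁ x - F₁ xb‖ ≤ (M₁' + 1) * ‖x - xb‖ :=
      hcont x hxU (lt_of_lt_of_le hx (min_le_left _ _))
    have h2 : ‖F₁ x - F₁ xb‖ < r₂ := by
      have h3 : ‖x - xb‖ * (M₁' + 1) < r₂ :=
        (lt_div_iff₀ hM₁1).mp (lt_of_lt_of_le hx (min_le_right _ _))
      nlinarith
    exact hr₂ (by simpa [Metric.mem_ball, dist_eq_norm] using h2)
  refine ⟨?_, ?_, ?_⟩
  · -- nonemptiness near xb
    refine mem_of_superset (inter_mem (Metric.ball_mem_nhds xb hρpos) (hU.mem_nhds hxb)) ?_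
    rintro x ⟨hxball, hxU⟩
    have hxn : ‖x - xb‖ < ρ := by simpa [Metric.mem_ball, dist_eq_norm] using hxball
    obtain ⟨⟨⟨A, hA⟩, _⟩, _⟩ := hball₁ x
      (lt_of_lt_of_le hxn (le_trans (min_le_left _ _) (min_le_left _ _)))
    obtain ⟨⟨B, hB⟩, _⟩ := hF x hxU hxn
    exact ⟨B.comp A, A, hA, B, hB, rfl⟩
  · -- local boundedness
    refine ⟨Metric.ball xb ρ ∩ U, inter_mem (Metric.ball_mem_nhds xb hρpos) (hU.mem_nhds hxb),
      M₂' * M₁', ?_⟩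
    rintro x ⟨hxball, hxU⟩ C ⟨A, hA, B, hB, rfl⟩
    have hxn : ‖x - xb‖ < ρ := by simpa [Metric.mem_ball, dist_eq_norm] using hxball
    obtain ⟨⟨_, hxU₁⟩, _⟩ := hball₁ x
      (lt_of_lt_of_le hxn (le_trans (min_le_left _ _) (min_le_left _ _)))
    obtain ⟨_, hFx⟩ := hF x hxU hxn
    have hAle : ‖A‖ ≤ M₁' := le_trans (hM₁ x hxU₁ A hA) (le_max_left _ _)
    have hBle : ‖B‖ ≤ M₂' := le_trans (hM₂ (F₁ x) hFx B hB) (le_max_left _ _)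
    calc ‖B.comp A‖ ≤ ‖B‖ * ‖A‖ := ContinuousLinearMap.opNorm_comp_le _ _
      _ ≤ M₂' * M₁' := mul_le_mul hBle hAle (norm_nonneg _) hM₂0
  · -- the o(‖x - xb‖) estimate
    intro ε hε
    set η := min 1 (ε / (M₁' + M₂' + 2)) with hηdef
    have hηpos : 0 < η := lt_min one_pos (div_pos hε (by linarith))
    have hη1 : η ≤ 1 := min_le_left _ _
    have hηε : η * (M₁' + M₂' + 2) ≤ ε := by
      have h := min_le_right 1 (ε / (M₁' + M₂' + 2))
      calc η * (M₁' + M₂' + 2) ≤ (ε / (M₁' + M₂' + 2)) * (M₁' + M₂' + 2) :=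
            mul_le_mul_of_nonneg_right h (by linarith)
        _ = ε := div_mul_cancel₀ _ (by positivity)
    obtain ⟨δ₁', hδ₁'pos, hδ₁'⟩ := hest₁ η hηpos
    obtain ⟨δ₂, hδ₂pos, hδ₂⟩ := hest₂ η hηpos
    refine ⟨min ρ (min δ₁' (δ₂ / (M₁' + 1))), lt_min hρpos (lt_min hδ₁'pos
      (div_pos hδ₂pos hM₁1)), ?_⟩
    rintro x hxU hx C ⟨A, hA, B, hB, rfl⟩
    have hxρ : ‖x - xb‖ < ρ := lt_of_lt_of_le hx (min_le_left _ _)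
    have hxδ₁' : ‖x - xb‖ < δ₁' :=
      lt_of_lt_of_le hx (le_trans (min_le_right _ _) (min_le_left _ _))
    have hxδ₂' : ‖x - xb‖ < δ₂ / (M₁' + 1) :=
      lt_of_lt_of_le hx (le_trans (min_le_right _ _) (min_le_right _ _))
    have hF₁lip : ‖F₁ x - F₁ xb‖ ≤ (M₁' + 1) * ‖x - xb‖ :=
      hcont x hxU (lt_of_lt_of_le hxρ (min_le_left _ _))
    have hF₁close : ‖F₁ x - F₁ xb‖ < δ₂ := by
      have h3 : ‖x - xb‖ * (M₁' + 1) < δ₂ := (lt_div_iff₀ hM₁1).mp hxδ₂'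
      nlinarith
    obtain ⟨_, hFxU₂⟩ := hF x hxU hxρ
    have hBle : ‖B‖ ≤ M₂' := le_trans (hM₂ (F₁ x) hFxU₂ B hB) (le_max_left _ _)
    have hA1 : ‖F₁ x - F₁ xb - A (x - xb)‖ ≤ η * ‖x - xb‖ := hδ₁' x hxU hxδ₁' A hA
    have hB1 : ‖F₂ (F₁ x) - F₂ (F₁ xb) - B (F₁ x - F₁ xb)‖ ≤ η * ‖F₁ x - F₁ xb‖ :=
      hδ₂ (F₁ x) (hmap hxU) hF₁close B hB
    have hB2 : ‖B (F₁ x - F₁ xb) - B (A (x - xb))‖ ≤ M₂' * (η * ‖x - xb‖) := by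
      rw [← map_sub]
      exact le_trans (B.le_opNorm _)
        (mul_le_mul hBle hA1 (norm_nonneg _) hM₂0)
    have key : ‖F₂ (F₁ x) - F₂ (F₁ xb) - (B.comp A) (x - xb)‖
        ≤ η * ‖F₁ x - F₁ xb‖ + M₂' * (η * ‖x - xb‖) := by
      calc ‖F₂ (F₁ x) - F₂ (F₁ xb) - (B.comp A) (x - xb)‖
          = ‖(F₂ (F₁ x) - F₂ (F₁ xb) - B (F₁ x - F₁ xb))
              + (B (F₁ x - F₁ xb) - B (A (x - xb)))‖ := by
            simp only [ContinuousLinearMap.coe_comp', Function.comp_apply]; abel_nf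
        _ ≤ _ := le_trans (norm_add_le _ _) (add_le_add hB1 hB2)
    have hηF : η * ‖F₁ x - F₁ xb‖ ≤ η * ((M₁' + 1) * ‖x - xb‖) :=
      mul_le_mul_of_nonneg_left hF₁lip (le_of_lt hηpos)
    calc ‖F₂ (F₁ x) - F₂ (F₁ xb) - (B.comp A) (x - xb)‖
        ≤ η * ((M₁' + 1) * ‖x - xb‖) + M₂' * (η * ‖x - xb‖) := by linarith
      _ = (η * (M₁' + M₂' + 1)) * ‖x - xb‖ := by ring
      _ ≤ ε * ‖x - xb‖ := by
          apply mul_le_mul_of_nonneg_right _ (norm_nonneg _)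
          nlinarith
end

section
/- Let F : Ω → ℝᵐ with Ω ⊆ ℝⁿ open be continuous and semismooth with respect to a mapping Ψ : ℝⁿ ⇉ ℝ^{m×n} at x̄ ∈ Ω. Then F is also semismooth with respect to cocl Ψ at x̄, where (cocl Ψ)(x) is the convex hull of (cl Ψ)(x) and cl Ψ is the graph-closure of Ψ. -/
open Filter Topology Set

noncomputable def clMap {n m : ℕ}
    (Ψ : EuclideanSpace ℝ (Fin n) → Set (EuclideanSpace ℝ (Fin n) →L[ℝ] EuclideanSpace ℝ (Fin m)))
    (x : EuclideanSpace ℝ (Fin n)) : Set (EuclideanSpace ℝ (Fin n) →L[ℝ] EuclideanSpace ℝ (Fin m)) :=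
  {A | (x, A) ∈ closure {p : EuclideanSpace ℝ (Fin n) × (EuclideanSpace ℝ (Fin n) →L[ℝ] EuclideanSpace ℝ (Fin m)) | p.2 ∈ Ψ p.1}}

noncomputable def coclMap {n m : ℕ}
    (Ψ : EuclideanSpace ℝ (Fin n) → Set (EuclideanSpace ℝ (Fin n) →L[ℝ] EuclideanSpace ℝ (Fin m)))
    (x : EuclideanSpace ℝ (Fin n)) : Set (EuclideanSpace ℝ (Fin n) →L[ℝ] EuclideanSpace ℝ (Fin m)) :=
  convexHull ℝ (clMap Ψ x)

/-- Lemma 3.6 (Gfrerer–Outrata): a continuous `Ψ`-semismooth map is also `cocl Ψ`-semismooth. -/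
theorem semismooth_cocl {n m : ℕ} (Ω : Set (EuclideanSpace ℝ (Fin n))) (hΩ : IsOpen Ω)
    (F : EuclideanSpace ℝ (Fin n) → EuclideanSpace ℝ (Fin m)) (hF : ContinuousOn F Ω)
    (Ψ : EuclideanSpace ℝ (Fin n) → Set (EuclideanSpace ℝ (Fin n) →L[ℝ] EuclideanSpace ℝ (Fin m)))
    (xb : EuclideanSpace ℝ (Fin n)) (hxb : xb ∈ Ω)
    (h : SemismoothAt Ω F Ψ xb) :
    SemismoothAt Ω F (coclMap Ψ) xb := by

  obtain ⟨h1, ⟨U, hU, M, hM⟩, h3⟩ := h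
  refine ⟨?_, ?_, ?_⟩
  · filter_upwards [h1] with x hx
    obtain ⟨A, hA⟩ := hx
    exact ⟨A, subset_convexHull ℝ _ (subset_closure hA)⟩
  · refine ⟨interior U, interior_mem_nhds.mpr hU, M, ?_⟩
    intro x hx A hA
    have key : ∀ B ∈ clMap Ψ x, ‖B‖ ≤ M := by
      intro B hB
      obtain ⟨p, hp, hlim⟩ := mem_closure_iff_seq_limit.mp hB
      have hx1 : Tendsto (fun k => (p k).1) atTop (𝓝 x) :=
        (continuous_fst.tendsto _).comp hlim
      have hx2 : Tendsto (fun k => ‖(p k).2‖) atTop (𝓝 ‖B‖) :=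
        ((continuous_snd.tendsto _).comp hlim).norm
      refine le_of_tendsto hx2 ?_
      have hUk : ∀ᶠ k in atTop, (p k).1 ∈ U :=
        hx1 (mem_interior_iff_mem_nhds.mp hx)
      filter_upwards [hUk] with k hk
      exact hM _ hk _ (hp k)
    have hconv : Convex ℝ {B : EuclideanSpace ℝ (Fin n) →L[ℝ] EuclideanSpace ℝ (Fin m) | ‖B‖ ≤ M} := by
      have : {B : EuclideanSpace ℝ (Fin n) →L[ℝ] EuclideanSpace ℝ (Fin m) | ‖B‖ ≤ M}
          = Metric.closedBall 0 M := by
        ext B; simp [mem_closedBall_zero_iff]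
      rw [this]; exact convex_closedBall 0 M
    exact convexHull_min key hconv hA
  · intro ε hε
    obtain ⟨δ, hδ, hest⟩ := h3 ε hε
    refine ⟨δ, hδ, ?_⟩
    intro x hx hxδ A hA
    have key : ∀ B ∈ clMap Ψ x, ‖F x - F xb - B (x - xb)‖ ≤ ε * ‖x - xb‖ := by
      intro B hB
      obtain ⟨p, hp, hlim⟩ := mem_closure_iff_seq_limit.mp hB
      have hx1 : Tendsto (fun k => (p k).1) atTop (𝓝 x) :=
        (continuous_fst.tendsto _).comp hlim
      have hx2 : Tendsto (fun k => (p k).2) atTop (𝓝 B) :=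
        (continuous_snd.tendsto _).comp hlim
      have hFc : Tendsto (fun k => F (p k).1) atTop (𝓝 (F x)) :=
        ((hF.continuousAt (hΩ.mem_nhds hx)).tendsto).comp hx1
      have happ : Tendsto (fun k => (p k).2 ((p k).1 - xb)) atTop (𝓝 (B (x - xb))) := by
        have hq : Tendsto (fun k => ((p k).2, (p k).1 - xb)) atTop (𝓝 (B, x - xb)) :=
          hx2.prodMk_nhds (hx1.sub tendsto_const_nhds)
        exact (isBoundedBilinearMap_apply.continuous.tendsto _).comp hq
      have hlhs : Tendsto (fun k => ‖F (p k).1 - F xb - (p k).2 ((p k).1 - xb)‖) atTop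
          (𝓝 ‖F x - F xb - B (x - xb)‖) :=
        ((hFc.sub tendsto_const_nhds).sub happ).norm
      have hrhs : Tendsto (fun k => ε * ‖(p k).1 - xb‖) atTop (𝓝 (ε * ‖x - xb‖)) :=
        tendsto_const_nhds.mul (hx1.sub tendsto_const_nhds).norm
      refine le_of_tendsto_of_tendsto hlhs hrhs ?_
      have hΩk : ∀ᶠ k in atTop, (p k).1 ∈ Ω := hx1.eventually (hΩ.eventually_mem hx)
      have hδk : ∀ᶠ k in atTop, ‖(p k).1 - xb‖ < δ :=
        Tendsto.eventually_lt_const hxδ ((hx1.sub tendsto_const_nhds).norm)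
      filter_upwards [hΩk, hδk] with k hk1 hk2
      exact hest _ hk1 hk2 _ (hp k)
    have hconv : Convex ℝ {B : EuclideanSpace ℝ (Fin n) →L[ℝ] EuclideanSpace ℝ (Fin m) |
        ‖F x - F xb - B (x - xb)‖ ≤ ε * ‖x - xb‖} := by
      intro B1 hB1 B2 hB2 a b ha hb hab
      simp only [mem_setOf_eq] at hB1 hB2 ⊢
      have heq : F x - F xb - (a • B1 + b • B2) (x - xb)
          = a • (F x - F xb - B1 (x - xb)) + b • (F x - F xb - B2 (x - xb)) := by
        simp only [ContinuousLinearMap.add_apply, ContinuousLinearMap.coe_smul',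
          Pi.smul_apply]
        conv_lhs => rw [show F x - F xb = (a + b) • (F x - F xb) by rw [hab, one_smul]]
        module
      rw [heq]
      calc ‖a • (F x - F xb - B1 (x - xb)) + b • (F x - F xb - B2 (x - xb))‖
          ≤ a * ‖F x - F xb - B1 (x - xb)‖ + b * ‖F x - F xb - B2 (x - xb)‖ := by
            refine (norm_add_le _ _).trans ?_
            rw [norm_smul, norm_smul, Real.norm_eq_abs, Real.norm_eq_abs,
              abs_of_nonneg ha, abs_of_nonneg hb]
        _ ≤ a * (ε * ‖x - xb‖) + b * (ε * ‖x - xb‖) := by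
            gcongr
        _ = ε * ‖x - xb‖ := by rw [← add_mul, hab, one_mul]
    exact convexHull_min key hconv hA
end

section
/- Let Ω ⊆ ℝⁿ be open and F : Ω → ℝᵐ be semismooth on Ω with respect to Ψ : ℝⁿ ⇉ ℝ^{m×n}. If at a point x ∈ Ω the set (cocl Ψ)(x) is a singleton {A}, then F is strictly differentiable at x with ∇F(x) = A. -/
open Filter Topology Set

/-- Segment gluing: a local Lipschitz-type bound at each point of `[0,1]` gives the
global bound between the endpoints. -/
lemma seg_glue {E : Type*} [NormedAddCommGroup E] (g : ℝ → E) (L : ℝ)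
    (h : ∀ t ∈ Icc (0:ℝ) 1, ∃ δ > 0, ∀ s ∈ Icc (0:ℝ) 1, |s - t| < δ →
      ‖g s - g t‖ ≤ L * |s - t|) :
    ‖g 1 - g 0‖ ≤ L := by
  set S : Set ℝ := {t | t ∈ Icc (0:ℝ) 1 ∧ ‖g t - g 0‖ ≤ L * t} with hS
  have h0 : (0:ℝ) ∈ S := ⟨⟨le_refl _, zero_le_one⟩, by simp⟩
  have hne : S.Nonempty := ⟨0, h0⟩
  have hbdd : BddAbove S := ⟨1, fun t ht => ht.1.2⟩
  set T := sSup S with hT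
  have hT0 : 0 ≤ T := le_csSup hbdd h0
  have hT1 : T ≤ 1 := csSup_le hne fun t ht => ht.1.2
  obtain ⟨δ, hδ, hloc⟩ := h T ⟨hT0, hT1⟩
  obtain ⟨t, htS, htlt⟩ := exists_lt_of_lt_csSup hne (show T - δ < T by linarith)
  have htle : t ≤ T := le_csSup hbdd htS
  have habs : |t - T| = T - t := by
    rw [abs_sub_comm, abs_of_nonneg (by linarith)]
  have hTS : T ∈ S := by
    refine ⟨⟨hT0, hT1⟩, ?_⟩
    have h1 : ‖g t - g T‖ ≤ L * |t - T| := hloc t htS.1 (by rw [habs]; linarith)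
    have h2 : ‖g t - g 0‖ ≤ L * t := htS.2
    calc ‖g T - g 0‖ ≤ ‖g T - g t‖ + ‖g t - g 0‖ := norm_sub_le_norm_sub_add_norm_sub _ _ _
      _ ≤ L * |t - T| + L * t := by rw [norm_sub_rev]; exact add_le_add h1 h2
      _ = L * T := by rw [habs]; ring
  rcases eq_or_lt_of_le hT1 with hEq | hlt
  · rw [hEq] at hTS; simpa using hTS.2
  · exfalso
    set s := min 1 (T + δ / 2) with hs
    have hsT : T < s := lt_min hlt (by linarith)
    have hsIcc : s ∈ Icc (0:ℝ) 1 := ⟨le_trans hT0 hsT.le, min_le_left _ _⟩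
    have hsδ : |s - T| < δ := by
      rw [abs_of_nonneg (by linarith)]
      have : s ≤ T + δ / 2 := min_le_right _ _
      linarith
    have hsS : s ∈ S := by
      refine ⟨hsIcc, ?_⟩
      have h1 : ‖g s - g T‖ ≤ L * |s - T| := hloc s hsIcc hsδ
      calc ‖g s - g 0‖ ≤ ‖g s - g T‖ + ‖g T - g 0‖ := norm_sub_le_norm_sub_add_norm_sub _ _ _
        _ ≤ L * |s - T| + L * T := add_le_add h1 hTS.2
        _ = L * s := by rw [abs_of_nonneg (by linarith)]; ring
    exact absurd (le_csSup hbdd hsS) (not_le.2 hsT)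

/-- From the singleton `coclMap` condition and local boundedness of `Ψ`, elements of
`Ψ z` for `z` near `x` are uniformly close to `A`. -/
lemma psi_close {n m : ℕ}
    (Ψ : EuclideanSpace ℝ (Fin n) → Set (EuclideanSpace ℝ (Fin n) →L[ℝ] EuclideanSpace ℝ (Fin m)))
    (x : EuclideanSpace ℝ (Fin n))
    (A : EuclideanSpace ℝ (Fin n) →L[ℝ] EuclideanSpace ℝ (Fin m))
    (hA : coclMap Ψ x = {A})
    (hb : ∃ U ∈ 𝓝 x, ∃ M : ℝ, ∀ z ∈ U, ∀ B ∈ Ψ z, ‖B‖ ≤ M)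
    (ε : ℝ) (hε : 0 < ε) :
    ∃ δ > 0, ∀ z, ‖z - x‖ < δ → ∀ B ∈ Ψ z, ‖B - A‖ ≤ ε := by
  by_contra hcon
  push_neg at hcon
  obtain ⟨U, hU, M, hM⟩ := hb
  obtain ⟨r, hr, hrU⟩ := Metric.mem_nhds_iff.1 hU
  have key : ∀ k : ℕ, ∃ z, ‖z - x‖ < min r (1 / (k + 1)) ∧ ∃ B ∈ Ψ z, ε < ‖B - A‖ := by
    intro k
    exact hcon _ (lt_min hr (by positivity))
  choose z hz B hB hBA using key
  have hzU : ∀ k, z k ∈ U := fun k => hrU (by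
    have := (hz k).trans_le (min_le_left _ _)
    simpa [Metric.mem_ball, dist_eq_norm] using this)
  have hBbd : ∀ k, B k ∈ Metric.closedBall (0 : EuclideanSpace ℝ (Fin n) →L[ℝ] EuclideanSpace ℝ (Fin m)) M := by
    intro k
    simpa [Metric.mem_closedBall, dist_eq_norm] using hM _ (hzU k) _ (hB k)
  obtain ⟨B₀, -, φ, hφ, hBlim⟩ :=
    tendsto_subseq_of_bounded Metric.isBounded_closedBall hBbd
  have hzlim : Tendsto (fun k => z (φ k)) atTop (𝓝 x) := by
    rw [tendsto_iff_norm_sub_tendsto_zero]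
    refine squeeze_zero (fun k => norm_nonneg _) (fun k => ((hz (φ k)).trans_le (min_le_right _ _)).le) ?_
    have h1 : Tendsto (fun k : ℕ => 1 / ((k : ℝ) + 1)) atTop (𝓝 0) := tendsto_one_div_add_atTop_nhds_zero_nat
    exact h1.comp (hφ.tendsto_atTop.comp tendsto_id) |>.congr (fun k => by simp)
  have hmem : B₀ ∈ clMap Ψ x := by
    have : Tendsto (fun k => (z (φ k), B (φ k))) atTop (𝓝 (x, B₀)) :=
      hzlim.prodMk_nhds hBlim
    exact mem_closure_of_tendsto this (Eventually.of_forall fun k => hB (φ k))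
  have hB₀ : B₀ = A := by
    have : B₀ ∈ coclMap Ψ x := subset_convexHull ℝ _ hmem
    rwa [hA, mem_singleton_iff] at this
  have hge : ε ≤ ‖B₀ - A‖ := by
    have : Tendsto (fun k => ‖B (φ k) - A‖) atTop (𝓝 ‖B₀ - A‖) :=
      ((hBlim.sub tendsto_const_nhds).norm)
    exact le_of_tendsto_of_tendsto tendsto_const_nhds this
      (Eventually.of_forall fun k => (hBA (φ k)).le)
  rw [hB₀] at hge
  simp at hge
  linarith

/-- Proposition 3.9(iii) (Gfrerer–Outrata): if `F` is semismooth on `Ω` w.r.t. `Ψ` and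
`(cocl Ψ)(x) = {A}` is a singleton at `x ∈ Ω`, then `F` is strictly differentiable at `x`
with `∇F(x) = A`. -/
theorem semismooth_strict_differentiable {n m : ℕ}
    (Ω : Set (EuclideanSpace ℝ (Fin n))) (hΩ : IsOpen Ω)
    (F : EuclideanSpace ℝ (Fin n) → EuclideanSpace ℝ (Fin m))
    (Ψ : EuclideanSpace ℝ (Fin n) → Set (EuclideanSpace ℝ (Fin n) →L[ℝ] EuclideanSpace ℝ (Fin m)))
    (h : ∀ x ∈ Ω, SemismoothAt Ω F Ψ x)
    (x : EuclideanSpace ℝ (Fin n)) (hx : x ∈ Ω)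
    (A : EuclideanSpace ℝ (Fin n) →L[ℝ] EuclideanSpace ℝ (Fin m))
    (hA : coclMap Ψ x = {A}) :
    HasStrictFDerivAt F A x := by
  rw [hasStrictFDerivAt_iff_isLittleO, Asymptotics.isLittleO_iff]
  intro c hc
  set ε := c / 2 with hε
  have hεpos : 0 < ε := by positivity
  obtain ⟨δ₁, hδ₁, hclose⟩ := psi_close Ψ x A hA (h x hx).2.1 ε hεpos
  obtain ⟨r₁, hr₁, hr₁Ω⟩ := Metric.mem_nhds_iff.1 (hΩ.mem_nhds hx)
  obtain ⟨r₂, hr₂, hr₂ne⟩ := Metric.mem_nhds_iff.1 (h x hx).1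
  set r := min δ₁ (min r₁ r₂) with hrdef
  have hrpos : 0 < r := lt_min hδ₁ (lt_min hr₁ hr₂)
  have hball : ∀ z ∈ Metric.ball x r, z ∈ Ω ∧ (Ψ z).Nonempty ∧ ‖z - x‖ < δ₁ := by
    intro z hz
    rw [Metric.mem_ball, dist_eq_norm] at hz
    refine ⟨hr₁Ω ?_, hr₂ne ?_, lt_of_lt_of_le hz (min_le_left _ _)⟩
    · rw [Metric.mem_ball, dist_eq_norm]
      exact lt_of_lt_of_le hz ((min_le_right _ _).trans (min_le_left _ _))
    · rw [Metric.mem_ball, dist_eq_norm]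
      exact lt_of_lt_of_le hz ((min_le_right _ _).trans (min_le_right _ _))
  have hnhds : Metric.ball x r ×ˢ Metric.ball x r ∈ 𝓝 ((x, x) : EuclideanSpace ℝ (Fin n) × EuclideanSpace ℝ (Fin n)) :=
    prod_mem_nhds (Metric.ball_mem_nhds _ hrpos) (Metric.ball_mem_nhds _ hrpos)
  filter_upwards [hnhds] with p hp
  obtain ⟨hp₁, hp₂⟩ := hp
  set N := ‖p.1 - p.2‖ with hN
  have hNnn : 0 ≤ N := norm_nonneg _
  -- the path
  set g : ℝ → EuclideanSpace ℝ (Fin m) := fun t => F (p.2 + t • (p.1 - p.2)) - t • A (p.1 - p.2) with hg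
  have hglue : ‖g 1 - g 0‖ ≤ (c * N) * 1 := by
    rw [mul_one]
    apply seg_glue
    intro t ht
    set zt := p.2 + t • (p.1 - p.2) with hzt
    have hztball : zt ∈ Metric.ball x r :=
      (convex_ball x r).add_smul_sub_mem hp₂ hp₁ ht
    obtain ⟨hztΩ, -, -⟩ := hball zt hztball
    obtain ⟨δt, hδt, hsemi⟩ := (h zt hztΩ).2.2 ε hεpos
    refine ⟨δt / (N + 1), by positivity, ?_⟩
    intro s hs hsδ
    set zs := p.2 + s • (p.1 - p.2) with hzs
    have hzsball : zs ∈ Metric.ball x r :=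
      (convex_ball x r).add_smul_sub_mem hp₂ hp₁ hs
    obtain ⟨hzsΩ, ⟨B, hBmem⟩, hzsδ₁⟩ := hball zs hzsball
    have hdiff : zs - zt = (s - t) • (p.1 - p.2) := by
      simp only [hzs, hzt, sub_smul]
      abel
    have hnorm : ‖zs - zt‖ = |s - t| * N := by
      rw [hdiff, norm_smul, Real.norm_eq_abs]
    have hlt : ‖zs - zt‖ < δt := by
      rw [hnorm]
      calc |s - t| * N ≤ δt / (N + 1) * N := by
            apply mul_le_mul_of_nonneg_right hsδ.le hNnn
        _ < δt / (N + 1) * (N + 1) := by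
            apply mul_lt_mul_of_pos_left (by linarith) (by positivity)
        _ = δt := div_mul_cancel₀ _ (by positivity)
    have h1 : ‖F zs - F zt - B (zs - zt)‖ ≤ ε * ‖zs - zt‖ := hsemi zs hzsΩ hlt B hBmem
    have h2 : ‖B - A‖ ≤ ε := hclose zs hzsδ₁ B hBmem
    have hrepr : g s - g t = (F zs - F zt - B (zs - zt)) + (B - A) (zs - zt) := by
      simp only [hg, ContinuousLinearMap.sub_apply, hdiff, map_smul]
      module
    calc ‖g s - g t‖ ≤ ‖F zs - F zt - B (zs - zt)‖ + ‖(B - A) (zs - zt)‖ := by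
          rw [hrepr]; exact norm_add_le _ _
      _ ≤ ε * ‖zs - zt‖ + ‖B - A‖ * ‖zs - zt‖ :=
          add_le_add h1 ((B - A).le_opNorm _)
      _ ≤ ε * ‖zs - zt‖ + ε * ‖zs - zt‖ := by
          have := mul_le_mul_of_nonneg_right h2 (norm_nonneg (zs - zt))
          linarith
      _ = (c * N) * |s - t| := by rw [hnorm, hε]; ring
  have hfinal : ‖F p.1 - F p.2 - A (p.1 - p.2)‖ ≤ c * N := by
    have h1 : g 1 = F p.1 - A (p.1 - p.2) := by simp [hg]
    have h0 : g 0 = F p.2 := by simp [hg]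
    have : g 1 - g 0 = F p.1 - F p.2 - A (p.1 - p.2) := by rw [h1, h0]; abel
    rw [← this]
    simpa using hglue
  simpa [hN] using hfinal
end

section
/- Let ψ : ℝⁿ × ℝᵐ → ℝ be continuous and q : ℝⁿ × ℝᵐ → ℝ ∪ {+∞} be lower semicontinuous, and suppose there is an open set Ω ⊆ ℝⁿ such that for every x ∈ Ω the set argmin_y {ψ(x,y) + q(x,y)} = {σ(x)} is a singleton. Assume further that for every x̄ ∈ Ω the function x ↦ q(x, σ(x̄)) is continuous at x̄, and there is a neighborhood U of x̄ such that {σ(x) | x ∈ U} is bounded. Then σ : Ω → ℝᵐ is continuous on Ω. -/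
open Filter Topology Set

/-!
Write `f = ψ + q`, which is lower semicontinuous. Near `x̄`, `σ` takes values in a compact set, so
it suffices to show that every cluster point `y` of `σ(x)` as `x → x̄` in `Ω` equals `σ(x̄)`. Along
such a net, lower semicontinuity gives `f(x̄, y) ≤ liminf f(x, σ(x))`, minimality of `σ(x)` gives
`f(x, σ(x)) ≤ f(x, σ(x̄))`, and the latter tends to `f(x̄, σ(x̄))` by continuity of `q(·, σ(x̄))`.
Hence `y` is a minimizer of `f(x̄, ·)`, and uniqueness forces `y = σ(x̄)`.
-/

theorem LowerSemicontinuousAt.le_of_mapClusterPt {X Y β : Type*} [TopologicalSpace X]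
    [TopologicalSpace Y] [LinearOrder β] [DenselyOrdered β] [TopologicalSpace β]
    [OrderTopology β] {f : X × Y → β} {σ : X → Y} {l : Filter X} {x₀ : X} {y z : Y}
    (hf : LowerSemicontinuousAt f (x₀, y)) (hl : l ≤ 𝓝 x₀)
    (hz : Tendsto (fun x => f (x, z)) l (𝓝 (f (x₀, z))))
    (hmin : ∀ᶠ x in l, f (x, σ x) ≤ f (x, z)) (hy : MapClusterPt y l σ) :
    f (x₀, y) ≤ f (x₀, z) := by
  by_contra! hlt
  obtain ⟨c, hzc, hcy⟩ := exists_between hlt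
  have hnear : ∀ᶠ p in 𝓝 x₀ ×ˢ 𝓝 y, c < f p := by
    rw [← nhds_prod_eq]
    exact hf c hcy
  obtain ⟨P, hP, Q, hQ, hPQ⟩ := eventually_prod_iff.mp hnear
  have hP' : ∀ᶠ x in l, P x := hl hP
  obtain ⟨x, hxQ, hxP, hxmin, hxz⟩ :=
    ((hy.frequently hQ).and_eventually (hP'.and (hmin.and (hz.eventually_lt_const hzc)))).exists
  exact (hPQ hxP hxQ).not_ge (hxmin.trans hxz.le)

theorem continuousWithinAt_of_argmin_eq_singleton {X Y β : Type*} [TopologicalSpace X]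
    [TopologicalSpace Y] [LinearOrder β] [DenselyOrdered β] [TopologicalSpace β]
    [OrderTopology β] {f : X × Y → β} {σ : X → Y} {s : Set X} {x₀ : X} {K : Set Y}
    (hf : LowerSemicontinuous f)
    (hargmin : ∀ x ∈ s, {y | ∀ y', f (x, y) ≤ f (x, y')} = {σ x}) (hx₀ : x₀ ∈ s)
    (hcont : ContinuousWithinAt (fun x => f (x, σ x₀)) s x₀)
    (hK : IsCompact K) (hσK : ∀ᶠ x in 𝓝[s] x₀, σ x ∈ K) :
    ContinuousWithinAt σ s x₀ := by
  refine hK.tendsto_nhds_of_unique_mapClusterPt hσK fun y _ hy => ?_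
  have hmin : ∀ x ∈ s, ∀ y', f (x, σ x) ≤ f (x, y') := fun x hx =>
    (eq_singleton_iff_unique_mem.mp (hargmin x hx)).1
  refine (eq_singleton_iff_unique_mem.mp (hargmin x₀ hx₀)).2 y fun y' => ?_
  calc f (x₀, y) ≤ f (x₀, σ x₀) :=
        LowerSemicontinuousAt.le_of_mapClusterPt (hf (x₀, y)) nhdsWithin_le_nhds hcont
          (eventually_nhdsWithin_of_forall fun x hx => hmin x hx (σ x₀)) hy
    _ ≤ f (x₀, y') := hmin x₀ hx₀ y'

theorem EReal.continuousAt_coe_real_add (a : ℝ) (b : EReal) :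
    ContinuousAt (fun p : EReal × EReal => p.1 + p.2) (a, b) :=
  EReal.continuousAt_add (Or.inl (EReal.coe_ne_top a)) (Or.inl (EReal.coe_ne_bot a))

theorem LowerSemicontinuous.coe_real_add {X : Type*} [TopologicalSpace X] {g : X → ℝ}
    {q : X → EReal} (hg : Continuous g) (hq : LowerSemicontinuous q) :
    LowerSemicontinuous fun x => (g x : EReal) + q x :=
  (continuous_coe_real_ereal.comp hg).lowerSemicontinuous.add' hq fun x =>
    EReal.continuousAt_coe_real_add (g x) (q x)

theorem ContinuousAt.coe_real_add {X : Type*} [TopologicalSpace X] {g : X → ℝ}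
    {q : X → EReal} {x : X} (hg : ContinuousAt g x) (hq : ContinuousAt q x) :
    ContinuousAt (fun x => (g x : EReal) + q x) x :=
  (EReal.continuousAt_coe_real_add (g x) (q x)).comp (f := fun x => ((g x : EReal), q x))
    ((continuous_coe_real_ereal.continuousAt.comp hg).prodMk hq)

theorem argmin_map_continuous_general {n m : ℕ}
    (ψ : EuclideanSpace ℝ (Fin n) × EuclideanSpace ℝ (Fin m) → ℝ) (hψ : Continuous ψ)
    (q : EuclideanSpace ℝ (Fin n) × EuclideanSpace ℝ (Fin m) → EReal)
    (hq : LowerSemicontinuous q)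
    (Ω : Set (EuclideanSpace ℝ (Fin n)))
    (σ : EuclideanSpace ℝ (Fin n) → EuclideanSpace ℝ (Fin m))
    (hargmin : ∀ x ∈ Ω,
      {y : EuclideanSpace ℝ (Fin m) |
        ∀ y' : EuclideanSpace ℝ (Fin m),
          (ψ (x, y) : EReal) + q (x, y) ≤ (ψ (x, y') : EReal) + q (x, y')} = {σ x})
    (hqcont : ∀ xb ∈ Ω, ContinuousAt (fun x => q (x, σ xb)) xb)
    (hbdd : ∀ xb ∈ Ω, ∃ U ∈ 𝓝 xb, Bornology.IsBounded (σ '' U)) :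
    ContinuousOn σ Ω := by
  intro xb hxb
  obtain ⟨U, hU, hUb⟩ := hbdd xb hxb
  have hψcont : ContinuousAt (fun x => ψ (x, σ xb)) xb := by fun_prop
  exact continuousWithinAt_of_argmin_eq_singleton (f := fun p => (ψ p : EReal) + q p)
    (hq.coe_real_add hψ) hargmin hxb (hψcont.coe_real_add (hqcont xb hxb)).continuousWithinAt
    hUb.isCompact_closure
    (mem_nhdsWithin_of_mem_nhds (mem_of_superset hU fun x hx => subset_closure ⟨x, hx, rfl⟩))

/-- Lemma 4.2: continuity of the single-valued global-minimizer map. Let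
`ψ : ℝⁿ × ℝᵐ → ℝ` be continuous, `q : ℝⁿ × ℝᵐ → ℝ ∪ {+∞}` (modelled by `EReal`-valued,
never `-∞`) be lsc, and suppose on an open set `Ω` the set `argmin_y ψ(x,y) + q(x,y)` is the
singleton `{σ(x)}`. If for each `xb ∈ Ω` the function `x ↦ q(x, σ(xb))` is continuous at `xb`
and `σ` is locally bounded near `xb`, then `σ` is continuous on `Ω`. -/
theorem argmin_map_continuous {n m : ℕ}
    (ψ : EuclideanSpace ℝ (Fin n) × EuclideanSpace ℝ (Fin m) → ℝ) (hψ : Continuous ψ)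
    (q : EuclideanSpace ℝ (Fin n) × EuclideanSpace ℝ (Fin m) → EReal)
    (hqbot : ∀ p, q p ≠ ⊥) (hq : LowerSemicontinuous q)
    (Ω : Set (EuclideanSpace ℝ (Fin n))) (hΩ : IsOpen Ω)
    (σ : EuclideanSpace ℝ (Fin n) → EuclideanSpace ℝ (Fin m))
    (hargmin : ∀ x ∈ Ω,
      {y : EuclideanSpace ℝ (Fin m) |
        ∀ y' : EuclideanSpace ℝ (Fin m),
          (ψ (x, y) : EReal) + q (x, y) ≤ (ψ (x, y') : EReal) + q (x, y')} = {σ x})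
    (hqcont : ∀ xb ∈ Ω, ContinuousAt (fun x => q (x, σ xb)) xb)
    (hbdd : ∀ xb ∈ Ω, ∃ U ∈ 𝓝 xb, Bornology.IsBounded (σ '' U)) :
    ContinuousOn σ Ω :=
  argmin_map_continuous_general ψ hψ q hq Ω σ hargmin hqcont hbdd
end
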